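/- On the integer network (ℤ, c) with nearest-neighbour conductances c_{n−1,n} > 0, there exists a nonconstant harmonic function of finite energy if and only if Σ_{n∈ℤ} 1/c_{n−1,n} < ∞; moreover the space of such harmonic functions modulo constants is one-dimensional, spanned by the function u with u(n) − u(n−1) = 1/c_{n−1,n}. -/

import Mathlib

/-!
Harmonicity at `n` says exactly that the current `c n * (u n - u (n - 1))` through the edge
`(n - 1, n)` equals the current through `(n, n + 1)`. So a harmonic `u` carries one constant
current `a`, its increments are `a / c n`, and its energy is `a ^ 2 * ∑ 1 / c n`; it is
nonconstant iff `a ≠ 0`. Conversely, when the resistances `1 / c n` are summable, the sums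
`∑' k : ℕ, 1 / c (n - k)` form a function with increments `1 / c n`, i.e. with unit current.
-/

open Function

lemma eq_of_forall_sub_pred_eq_zero {G : Type*} [AddGroup G] {u : ℤ → G}
    (hu : ∀ n, u n - u (n - 1) = 0) (m k : ℤ) : u m = u k := by
  have hper : Periodic u 1 := fun n => by
    simpa [sub_eq_zero] using hu (n + 1)
  simpa using (hper.int_mul_eq m).trans (hper.int_mul_eq k).symm

lemma Summable.exists_sub_pred_eq {G : Type*} [UniformSpace G] [AddCommGroup G]
    [IsUniformAddGroup G] [CompleteSpace G] [T2Space G] {r : ℤ → G} (hr : Summable r) :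
    ∃ u : ℤ → G, ∀ n, u n - u (n - 1) = r n := by
  have htail : ∀ n : ℤ, Summable fun k : ℕ => r (n - k) :=
    fun n => hr.comp_injective (i := fun k : ℕ => n - k) fun a b h => by simpa using h
  refine ⟨fun n => ∑' k : ℕ, r (n - k), fun n => ?_⟩
  beta_reduce
  rw [(htail n).tsum_eq_zero_add]
  simp [sub_sub, add_comm]

section Network

variable {c u : ℤ → ℝ}

lemma harmonic_iff_periodic_current :
    (∀ n, c n * (u n - u (n - 1)) + c (n + 1) * (u n - u (n + 1)) = 0) ↔
      Periodic (fun n => c n * (u n - u (n - 1))) 1 := by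
  refine forall_congr' fun n => ?_
  simp only [add_sub_cancel_right]
  constructor <;> intro h <;> linarith

lemma exists_sub_pred_eq_div_of_harmonic (hc : ∀ n, c n ≠ 0)
    (hu : ∀ n, c n * (u n - u (n - 1)) + c (n + 1) * (u n - u (n + 1)) = 0) :
    ∃ a : ℝ, ∀ n, u n - u (n - 1) = a / c n := by
  refine ⟨c 0 * (u 0 - u (0 - 1)), fun n => ?_⟩
  rw [eq_div_iff (hc n), mul_comm]
  simpa using (harmonic_iff_periodic_current.mp hu).int_mul_eq n

lemma summable_energy_iff_summable_inv (hc : ∀ n, c n ≠ 0) {a : ℝ} (ha : a ≠ 0)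
    (hu : ∀ n, u n - u (n - 1) = a / c n) :
    Summable (fun n => c n * (u n - u (n - 1)) ^ 2) ↔ Summable (fun n => 1 / c n) := by
  have henergy : (fun n => c n * (u n - u (n - 1)) ^ 2) = fun n => a ^ 2 * (1 / c n) := by
    funext n
    rw [hu n]
    field_simp [hc n]
  rw [henergy, summable_mul_left_iff (pow_ne_zero 2 ha)]

end Network

theorem integers_harmonic_iff_summable_resistances (c : ℤ → ℝ) (hc : ∀ n, 0 < c n) :
    ((∃ u : ℤ → ℝ,
        (∀ n, c n * (u n - u (n - 1)) + c (n + 1) * (u n - u (n + 1)) = 0)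
        ∧ Summable (fun n : ℤ => c n * (u n - u (n - 1)) ^ 2)
        ∧ ∃ m k, u m ≠ u k)
      ↔ Summable (fun n : ℤ => 1 / c n))
    ∧ ∀ u : ℤ → ℝ,
        (∀ n, c n * (u n - u (n - 1)) + c (n + 1) * (u n - u (n + 1)) = 0) →
        Summable (fun n : ℤ => c n * (u n - u (n - 1)) ^ 2) →
        ∃ a : ℝ, ∀ n, u n - u (n - 1) = a / c n := by
  have hc0 : ∀ n, c n ≠ 0 := fun n => (hc n).ne'
  refine ⟨⟨?_, ?_⟩, fun u hu _ => exists_sub_pred_eq_div_of_harmonic hc0 hu⟩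
  · rintro ⟨u, hu, henergy, m, k, hmk⟩
    obtain ⟨a, ha⟩ := exists_sub_pred_eq_div_of_harmonic hc0 hu
    have ha0 : a ≠ 0 := by
      rintro rfl
      exact hmk (eq_of_forall_sub_pred_eq_zero (by simpa using ha) m k)
    exact (summable_energy_iff_summable_inv hc0 ha0 ha).mp henergy
  · intro hr
    obtain ⟨u, hu⟩ := hr.exists_sub_pred_eq
    refine ⟨u, ?_, (summable_energy_iff_summable_inv hc0 one_ne_zero hu).mpr hr, 0, -1, ?_⟩
    · refine harmonic_iff_periodic_current.mpr fun n => ?_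
      simp only [hu, mul_one_div_cancel (hc0 _)]
    · intro h
      have h0 := hu 0
      rw [zero_sub, h, sub_self] at h0
      exact one_div_ne_zero (hc0 0) h0.symm
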